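/- Let f ∈ L¹(ℝ) ∩ L^∞(ℝ) and let ε > 0. If (x_n)_{n∈ℕ} is a sequence of real numbers converging to x with Mf(x_n) ≥ Mf(x) + ε for all n ∈ ℕ, then there is no r > 0 such that Tf(x_n) ≥ r for all n ∈ ℕ. -/

import Mathlib

open MeasureTheory Filter Set Topology
open scoped Classical

/-- The average of `f` over the interval of radius `r` centered at `x`. -/
noncomputable def avgFn (f : ℝ → ℝ) (x r : ℝ) : ℝ :=
  (1 / (2 * r)) * ∫ y in (-r)..r, f (x + y)

/-- The (uncentered-in-value, centered-in-interval) Hardy–Littlewood maximal function,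
taking values in `[0,∞]`. -/
noncomputable def maxFn (f : ℝ → ℝ) (x : ℝ) : ENNReal :=
  ⨆ (r : ℝ) (_ : 0 < r), ENNReal.ofReal (avgFn (fun y => |f y|) x r)

/-- The set `E_{f,x}` of radii attaining the maximal value. -/
def freqSet (f : ℝ → ℝ) (x : ℝ) : Set ℝ :=
  {r : ℝ | 0 < r ∧ maxFn f x = ENNReal.ofReal (avgFn (fun y => |f y|) x r)}

/-- The frequency function `Tf`. -/
noncomputable def freqFn (f : ℝ → ℝ) (x : ℝ) : ℝ :=
  if (freqSet f x).Nonempty then sInf (freqSet f x) else 0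

lemma avgFn_abs_eq (f : ℝ → ℝ) (x r : ℝ) :
    avgFn (fun y => |f y|) x r = (1 / (2 * r)) * ∫ t in (x - r)..(x + r), |f t| := by
  unfold avgFn
  rw [intervalIntegral.integral_comp_add_left (fun t => |f t|) x]
  ring_nf

lemma avgFn_abs_nonneg (f : ℝ → ℝ) (x r : ℝ) (hr : 0 < r) :
    0 ≤ avgFn (fun y => |f y|) x r := by
  unfold avgFn
  apply mul_nonneg (by positivity)
  apply intervalIntegral.integral_nonneg (by linarith)
  intro u _; exact abs_nonneg _

lemma avgFn_le_essSup (f : ℝ → ℝ) (hf1 : Integrable f) (hfinf : MemLp f ⊤ volume)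
    (x r : ℝ) (hr : 0 < r) :
    avgFn (fun y => |f y|) x r ≤ (eLpNorm f ⊤ volume).toReal := by
  set C := (eLpNorm f ⊤ volume).toReal with hC
  have hC0 : 0 ≤ C := ENNReal.toReal_nonneg
  have htop : eLpNorm f ⊤ volume ≠ ⊤ := hfinf.2.ne
  have hae : ∀ᵐ t, |f t| ≤ C := by
    filter_upwards [ae_le_eLpNormEssSup (f := f) (μ := volume)] with t ht
    have h1 : (‖f t‖₊ : ENNReal) ≤ eLpNorm f ⊤ volume := by
      rw [eLpNorm_exponent_top]; exact_mod_cast ht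
    have := ENNReal.toReal_mono htop h1
    simpa [C, Real.norm_eq_abs] using this
  rw [avgFn_abs_eq]
  have hab : x - r ≤ x + r := by linarith
  have hle : (∫ t in (x - r)..(x + r), |f t|) ≤ ∫ _ in (x - r)..(x + r), C :=
    intervalIntegral.integral_mono_ae hab hf1.abs.intervalIntegrable
      intervalIntegrable_const hae
  have : (∫ _ in (x - r)..(x + r), C) = 2 * r * C := by
    have h2r : (x + r) - (x - r) = 2 * r := by ring
    rw [intervalIntegral.integral_const, h2r, smul_eq_mul]
  rw [this] at hle
  calc (1 / (2 * r)) * ∫ t in (x - r)..(x + r), |f t|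
      ≤ (1 / (2 * r)) * (2 * r * C) := by
        apply mul_le_mul_of_nonneg_left hle (by positivity)
    _ = C := by field_simp

lemma maxFn_ne_top (f : ℝ → ℝ) (hf1 : Integrable f) (hfinf : MemLp f ⊤ volume) (x : ℝ) :
    maxFn f x ≠ ⊤ := by
  have : maxFn f x ≤ ENNReal.ofReal ((eLpNorm f ⊤ volume).toReal) := by
    apply iSup₂_le
    intro r hr
    exact ENNReal.ofReal_le_ofReal (avgFn_le_essSup f hf1 hfinf x r hr)
  exact (this.trans_lt ENNReal.ofReal_lt_top).ne

lemma avgFn_le_maxFn (f : ℝ → ℝ) (hf1 : Integrable f) (hfinf : MemLp f ⊤ volume)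
    (x r : ℝ) (hr : 0 < r) :
    avgFn (fun y => |f y|) x r ≤ (maxFn f x).toReal := by
  have h1 : ENNReal.ofReal (avgFn (fun y => |f y|) x r) ≤ maxFn f x := by
    exact le_iSup₂ (f := fun (r : ℝ) (_ : 0 < r) =>
      ENNReal.ofReal (avgFn (fun y => |f y|) x r)) r hr
  have h2 := ENNReal.toReal_mono (maxFn_ne_top f hf1 hfinf x) h1
  rwa [ENNReal.toReal_ofReal (avgFn_abs_nonneg f x r hr)] at h2

lemma avgFn_shift_le (f : ℝ → ℝ) (hf1 : Integrable f) (x x' s : ℝ) (hs : 0 < s) :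
    avgFn (fun y => |f y|) x' s ≤
      ((s + |x' - x|) / s) * avgFn (fun y => |f y|) x (s + |x' - x|) := by
  set δ := |x' - x| with hδ
  have hδ0 : 0 ≤ δ := abs_nonneg _
  have hsd : 0 < s + δ := by linarith
  have h1 : x' - x ≤ δ := le_abs_self _
  have h2 : -(δ) ≤ x' - x := neg_abs_le _
  rw [avgFn_abs_eq, avgFn_abs_eq]
  have hle : (∫ t in (x' - s)..(x' + s), |f t|) ≤
      ∫ t in (x - (s + δ))..(x + (s + δ)), |f t| := by
    apply intervalIntegral.integral_mono_interval (by linarith) (by linarith) (by linarith)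
    · filter_upwards with t; exact abs_nonneg _
    · exact hf1.abs.intervalIntegrable
  calc (1 / (2 * s)) * ∫ t in (x' - s)..(x' + s), |f t|
      ≤ (1 / (2 * s)) * ∫ t in (x - (s + δ))..(x + (s + δ)), |f t| := by
        apply mul_le_mul_of_nonneg_left hle (by positivity)
    _ = ((s + δ) / s) * ((1 / (2 * (s + δ))) * ∫ t in (x - (s + δ))..(x + (s + δ)), |f t|) := by
        field_simp

theorem no_uniform_lower_bound_on_frequencies (f : ℝ → ℝ)
    (hf1 : Integrable f) (hfinf : MemLp f ⊤ volume) (ε : ℝ) (hε : 0 < ε)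
    (x : ℝ) (xs : ℕ → ℝ) (hconv : Tendsto xs atTop (nhds x))
    (hge : ∀ n : ℕ, (maxFn f x).toReal + ε ≤ (maxFn f (xs n)).toReal) :
    ¬ ∃ r : ℝ, 0 < r ∧ ∀ n : ℕ, r ≤ freqFn f (xs n) := by
  rintro ⟨r, hr, hrn⟩
  set M := (maxFn f x).toReal with hM
  have hM0 : 0 ≤ M := ENNReal.toReal_nonneg
  -- pick n with |xs n - x| small
  have hpos : 0 < r * ε / (M + 1) := by positivity
  have : ∀ᶠ n in atTop, dist (xs n) x < r * ε / (M + 1) :=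
    (Metric.tendsto_nhds.mp hconv) _ hpos
  obtain ⟨n, hn⟩ := this.exists
  have hδlt : |xs n - x| < r * ε / (M + 1) := by rwa [Real.dist_eq] at hn
  set δ := |xs n - x| with hδ
  have hδ0 : 0 ≤ δ := abs_nonneg _
  -- freqSet nonempty and get attaining radius s ≥ r
  have hrf := hrn n
  by_cases hne : (freqSet f (xs n)).Nonempty
  · obtain ⟨s, hs0, hseq⟩ := hne
    have hbdd : BddBelow (freqSet f (xs n)) := ⟨0, fun t ht => ht.1.le⟩
    have hinf_le : sInf (freqSet f (xs n)) ≤ s := csInf_le hbdd ⟨hs0, hseq⟩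
    have hfr : freqFn f (xs n) = sInf (freqSet f (xs n)) := by
      rw [freqFn, if_pos ⟨s, hs0, hseq⟩]
    have hrs : r ≤ s := by rw [hfr] at hrf; linarith
    -- maxFn at xs n equals the average at radius s
    have havg0 := avgFn_abs_nonneg f (xs n) s hs0
    have heq : (maxFn f (xs n)).toReal = avgFn (fun y => |f y|) (xs n) s := by
      rw [hseq, ENNReal.toReal_ofReal havg0]
    have hshift := avgFn_shift_le f hf1 x (xs n) s hs0
    have hsd : 0 < s + δ := by linarith
    have hbig : avgFn (fun y => |f y|) x (s + δ) ≤ M :=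
      avgFn_le_maxFn f hf1 hfinf x (s + δ) hsd
    have hfrac : ((s + δ) / s) * avgFn (fun y => |f y|) x (s + δ) ≤ ((s + δ) / s) * M := by
      apply mul_le_mul_of_nonneg_left hbig (by positivity)
    have hchain : M + ε ≤ ((s + δ) / s) * M := by
      calc M + ε ≤ (maxFn f (xs n)).toReal := hge n
        _ = avgFn (fun y => |f y|) (xs n) s := heq
        _ ≤ ((s + δ) / s) * avgFn (fun y => |f y|) x (s + δ) := hshift
        _ ≤ ((s + δ) / s) * M := hfrac
    -- derive contradiction: ((s+δ)/s) * M = M + (δ/s) M ≤ M + (δ/r) M < M + ε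
    have h1 : ((s + δ) / s) * M = M + (δ / s) * M := by field_simp
    have h2 : (δ / s) * M ≤ (δ / r) * M := by
      apply mul_le_mul_of_nonneg_right _ hM0
      apply div_le_div_of_nonneg_left hδ0 hr hrs
    have h3 : (δ / r) * M < ε := by
      have hδM : δ * M < r * ε := by
        have h4 : δ * (M + 1) < r * ε := by
          calc δ * (M + 1) < (r * ε / (M + 1)) * (M + 1) := by
                apply mul_lt_mul_of_pos_right hδlt (by linarith)
            _ = r * ε := by field_simp
        nlinarith
      rw [div_mul_eq_mul_div, div_lt_iff₀ hr]
      linarith [hδM]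
    rw [h1] at hchain
    linarith
  · rw [freqFn, if_neg hne] at hrf; linarith
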